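/- arXiv:1210.2809 — 5 statements merged into one kernel-verified Lean document; each statement's English description precedes it below -/
import Mathlib

section
/- Let M : [−1,∞) → ℝ≥0 be continuous with M ≡ 0 on [−1,0], and suppose there are constants K₁ > 0, C > 0 and α < 0 such that M(t) ≤ K₁ + C ∫₀ᵗ e^{2α(t−s)}(M(s) + M(s−1)) ds for all t ≥ 0. Then M(t) ≤ K₁ e^{ν t} for all t ≥ 0, where ν = C(1 + e^{−2α}). -/
/-!
Since `α < 0`, the weight `e^{2α(t-s)}` is at most `1`, and since `M` vanishes on `[-1, 0]` the
delayed integral `∫₀ᵗ M(s-1) ds = ∫₋₁^{t-1} M` is at most `∫₀ᵗ M`. Hence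
`M t ≤ K₁ + 2C ∫₀ᵗ M`, and Grönwall's inequality gives `M t ≤ K₁ e^{2Ct} ≤ K₁ e^{νt}`,
as `e^{-2α} ≥ 1`.
-/

open Set Real MeasureTheory intervalIntegral

theorem add_mul_gronwallBound_zero (K L x : ℝ) :
    K + L * gronwallBound 0 L K x = K * exp (L * x) := by
  rcases eq_or_ne L 0 with rfl | hL
  · simp [gronwallBound_K0]
  · rw [gronwallBound_of_K_ne_0 hL]
    field_simp
    ring

theorem le_mul_exp_of_le_add_mul_integral {u : ℝ → ℝ} {K L a : ℝ} (hL : 0 ≤ L)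
    (hu : ContinuousOn u (Ici a)) (h : ∀ t ≥ a, u t ≤ K + L * ∫ s in a..t, u s) :
    ∀ t ≥ a, u t ≤ K * exp (L * (t - a)) := by
  intro t ht
  set F : ℝ → ℝ := fun x => ∫ s in a..x, u s
  have hF_cont : ContinuousOn F (Icc a t) := by
    have := continuousOn_primitive_interval (μ := volume)
      ((hu.mono (uIcc_of_le ht ▸ Icc_subset_Ici_self)).integrableOn_compact isCompact_uIcc)
    rwa [uIcc_of_le ht] at this
  have hF_deriv : ∀ x ∈ Ico a t, HasDerivWithinAt F (u x) (Ici x) x := by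
    intro x hx
    have hsub : Ioi x ⊆ Ici a := fun s hs => hx.1.trans (le_of_lt hs)
    exact integral_hasDerivWithinAt_right
      ((hu.mono (uIcc_of_le hx.1 ▸ Icc_subset_Ici_self)).intervalIntegrable)
      ((hu.mono hsub).stronglyMeasurableAtFilter_nhdsWithin measurableSet_Ioi x)
      ((hu x hx.1).mono hsub)
  have hF_le := le_gronwallBound_of_liminf_deriv_right_le (δ := 0) (K := L) (ε := K) hF_cont
    (fun x hx _ hr => (hF_deriv x hx).liminf_right_slope_le hr) (by simp [F])
    (fun x hx => by linarith [h x hx.1])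
  calc u t ≤ K + L * F t := h t ht
    _ ≤ K + L * gronwallBound 0 L K (t - a) := by gcongr; exact hF_le t ⟨ht, le_rfl⟩
    _ = K * exp (L * (t - a)) := add_mul_gronwallBound_zero K L (t - a)

theorem integral_comp_sub_le_integral_of_eqOn_zero {u : ℝ → ℝ} {τ t : ℝ} (hτ : 0 ≤ τ)
    (ht : 0 ≤ t) (hu : IntervalIntegrable u volume (-τ) t) (hnn : ∀ s ∈ Icc (-τ) t, 0 ≤ u s)
    (hzero : ∀ s ∈ Icc (-τ) 0, u s = 0) :
    ∫ s in 0..t, u (s - τ) ≤ ∫ s in 0..t, u s := by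
  have hnn_ae : 0 ≤ᵐ[volume.restrict (Ioc (-τ) t)] u := by
    filter_upwards [ae_restrict_mem measurableSet_Ioc] with s hs
    exact hnn s (Ioc_subset_Icc_self hs)
  have h0 : (0 : ℝ) ∈ uIcc (-τ) t := by rw [uIcc_of_le (by linarith)]; exact ⟨by linarith, ht⟩
  calc ∫ s in 0..t, u (s - τ) = ∫ s in -τ..t - τ, u s := by
        rw [integral_comp_sub_right, zero_sub]
    _ ≤ ∫ s in -τ..t, u s := integral_mono_interval le_rfl (by linarith) (by linarith) hnn_ae hu
    _ = (∫ s in -τ..0, u s) + ∫ s in 0..t, u s :=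
        (integral_add_adjacent_intervals (hu.mono_set (uIcc_subset_uIcc_left h0))
          (hu.mono_set (uIcc_subset_uIcc_right h0))).symm
    _ = ∫ s in 0..t, u s := by
        have hvanish : ∫ s in -τ..0, u s = 0 := by
          rw [integral_congr (g := fun _ => 0) fun s hs =>
            hzero s (by rwa [uIcc_of_le (by linarith)] at hs)]
          exact integral_zero
        rw [hvanish, zero_add]

theorem integral_exp_mul_sub_mul_le_integral {g : ℝ → ℝ} {c t : ℝ} (hc : c ≤ 0) (ht : 0 ≤ t)
    (hg : ContinuousOn g (Icc 0 t)) (hnn : ∀ s ∈ Icc 0 t, 0 ≤ g s) :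
    ∫ s in 0..t, exp (c * (t - s)) * g s ≤ ∫ s in 0..t, g s := by
  refine integral_mono_on ht ?_ (hg.intervalIntegrable_of_Icc ht) fun s hs => ?_
  · exact ((continuous_const.mul (continuous_const.sub continuous_id)).rexp.continuousOn.mul
      hg).intervalIntegrable_of_Icc ht
  · have hexp : exp (c * (t - s)) ≤ 1 := exp_le_one_iff.2 (mul_nonpos_of_nonpos_of_nonneg hc
      (by linarith [hs.2]))
    simpa using mul_le_mul_of_nonneg_right hexp (hnn s hs)

theorem le_add_two_mul_integral_of_le_add_delay_integral {M : ℝ → ℝ} {K₁ C α : ℝ}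
    (hcont : ContinuousOn M (Ici (-1))) (hnn : ∀ t, -1 ≤ t → 0 ≤ M t)
    (hzero : ∀ t ∈ Icc (-1 : ℝ) 0, M t = 0) (hC : 0 ≤ C) (hα : α ≤ 0)
    (hineq : ∀ t ≥ (0 : ℝ), M t ≤ K₁ + C * ∫ s in (0 : ℝ)..t,
        exp (2 * α * (t - s)) * (M s + M (s - 1))) :
    ∀ t ≥ (0 : ℝ), M t ≤ K₁ + 2 * C * ∫ s in (0 : ℝ)..t, M s := by
  intro t ht
  have hM : ContinuousOn M (Icc 0 t) :=
    hcont.mono fun s hs => show -1 ≤ s by linarith [hs.1]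
  have hM_delayed : ContinuousOn (fun s => M (s - 1)) (Icc 0 t) :=
    hcont.comp (continuous_sub_right 1).continuousOn fun s hs => show -1 ≤ s - 1 by linarith [hs.1]
  have hdelay := integral_comp_sub_le_integral_of_eqOn_zero zero_le_one ht
    ((hcont.mono Icc_subset_Ici_self).intervalIntegrable_of_Icc (by linarith))
    (fun s hs => hnn s hs.1) hzero
  have hweight := integral_exp_mul_sub_mul_le_integral (g := fun s => M s + M (s - 1))
    (c := 2 * α) (by linarith) ht (hM.add hM_delayed)
    fun s hs => add_nonneg (hnn s (by linarith [hs.1])) (hnn (s - 1) (by linarith [hs.1]))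
  rw [integral_add (hM.intervalIntegrable_of_Icc ht) (hM_delayed.intervalIntegrable_of_Icc ht)]
    at hweight
  calc M t ≤ K₁ + C * ∫ s in (0 : ℝ)..t, exp (2 * α * (t - s)) * (M s + M (s - 1)) := hineq t ht
    _ ≤ K₁ + C * ((∫ s in (0 : ℝ)..t, M s) + ∫ s in (0 : ℝ)..t, M s) := by gcongr; linarith
    _ = K₁ + 2 * C * ∫ s in (0 : ℝ)..t, M s := by ring

theorem stmt2 (M : ℝ → ℝ) (K₁ C α : ℝ)
    (hcont : ContinuousOn M (Set.Ici (-1)))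
    (hnn : ∀ t, -1 ≤ t → 0 ≤ M t)
    (hzero : ∀ t ∈ Set.Icc (-1 : ℝ) 0, M t = 0)
    (hK : 0 < K₁) (hC : 0 < C) (hα : α < 0)
    (hineq : ∀ t ≥ (0 : ℝ), M t ≤ K₁ + C * ∫ s in (0 : ℝ)..t,
        Real.exp (2 * α * (t - s)) * (M s + M (s - 1))) :
    ∀ t ≥ (0 : ℝ), M t ≤ K₁ * Real.exp (C * (1 + Real.exp (-2 * α)) * t) := by
  have hgronwall : ∀ t ≥ (0 : ℝ), M t ≤ K₁ * exp (2 * C * t) := by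
    simpa using le_mul_exp_of_le_add_mul_integral (by positivity)
      (hcont.mono (Ici_subset_Ici.2 (by norm_num)))
      (le_add_two_mul_integral_of_le_add_delay_integral hcont hnn hzero hC.le hα.le hineq)
  have hrate : 2 * C ≤ C * (1 + exp (-2 * α)) := by
    nlinarith [one_le_exp (show 0 ≤ -2 * α by linarith)]
  intro t ht
  calc M t ≤ K₁ * exp (2 * C * t) := hgronwall t ht
    _ ≤ K₁ * exp (C * (1 + exp (-2 * α)) * t) := by gcongr
end

section
/- Let y : [0,∞) → ℝ≥0 be continuous (extended by 0 on [−1,0)), and r : [0,∞) → ℝ with sup_{t≥0} |r(t)e^{−λt}| < ∞ for some λ > 0 satisfying λ − p − q e^{−λ} > 0 (p, q ≥ 0). If y(t) ≤ p ∫₀ᵗ y(s) ds + q ∫₀ᵗ y(s−1) ds + r(t) for all t ≥ 0, then there exists a constant C = C(λ) such that y(t) ≤ C e^{λ t} for all t ≥ 0. -/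
/-!
Take `C` with `C (λ - p - q e^{-λ}) = (R + 1) λ`, where `R` bounds `|r t e^{-λt}|`. Then `C e^{λt}` is a
strict supersolution: if `y < C e^{λs}` on `[0, T)`, the integral inequality gives
`y T ≤ (C (p + q e^{-λ}) / λ + R) e^{λT} = (C - 1) e^{λT}`, the delayed term costing the factor `e^{-λ}`
because `y` vanishes on `[-1, 0)`. By continuity, `y` can therefore never reach `C e^{λt}`.
-/

open MeasureTheory Set Real

theorem forall_lt_of_forall_Ico_lt {f g : ℝ → ℝ} {a : ℝ} (hf : ContinuousOn f (Ici a))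
    (hg : ContinuousOn g (Ici a))
    (hstep : ∀ T ≥ a, (∀ s ∈ Ico a T, f s < g s) → f T < g T) :
    ∀ t ≥ a, f t < g t := by
  by_contra! ⟨t₀, ht₀, hgf₀⟩
  set S := Ici a ∩ (g - f) ⁻¹' Iic 0
  have hS : IsClosed S := (hg.sub hf).preimage_isClosed_of_isClosed isClosed_Ici isClosed_Iic
  have hbdd : BddBelow S := ⟨a, fun _ hs => hs.1⟩
  obtain ⟨haT, hgfT⟩ : sInf S ∈ S := hS.csInf_mem ⟨t₀, ht₀, by simpa using hgf₀⟩ hbdd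
  refine (hstep _ haT fun s hs => ?_).not_ge (by simpa using hgfT)
  by_contra! hgf
  exact hs.2.not_ge (csInf_le hbdd ⟨hs.1, by simpa using hgf⟩)

theorem integral_mul_exp_eq {c k T : ℝ} (hk : k ≠ 0) :
    ∫ s in (0 : ℝ)..T, c * exp (k * s) = c * (exp (k * T) - 1) / k := by
  rw [intervalIntegral.integral_const_mul,
    intervalIntegral.integral_comp_mul_left (fun x => exp x) hk, integral_exp]
  simp only [mul_zero, exp_zero, smul_eq_mul]
  ring

theorem integral_le_mul_exp_div {f : ℝ → ℝ} {c k T : ℝ} (hk : 0 < k) (hc : 0 ≤ c) (hT : 0 ≤ T)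
    (hf_nonneg : ∀ s ∈ Ioo 0 T, 0 ≤ f s) (hf_le : ∀ s ∈ Ioo 0 T, f s ≤ c * exp (k * s)) :
    ∫ s in (0 : ℝ)..T, f s ≤ c * exp (k * T) / k := by
  have hexp_int : IntegrableOn (fun s => c * exp (k * s)) (Ioo 0 T) :=
    (by fun_prop : Continuous fun s => c * exp (k * s)).integrableOn_Icc.mono_set Ioo_subset_Icc_self
  calc ∫ s in (0 : ℝ)..T, f s
      = ∫ s in Ioo 0 T, f s := by
        rw [intervalIntegral.integral_of_le hT, integral_Ioc_eq_integral_Ioo]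
    _ ≤ ∫ s in Ioo 0 T, c * exp (k * s) :=
        integral_mono_of_nonneg ((ae_restrict_iff' measurableSet_Ioo).2 (.of_forall hf_nonneg))
          hexp_int ((ae_restrict_iff' measurableSet_Ioo).2 (.of_forall hf_le))
    _ = c * (exp (k * T) - 1) / k := by
        rw [← integral_Ioc_eq_integral_Ioo, ← intervalIntegral.integral_of_le hT,
          integral_mul_exp_eq hk.ne']
    _ ≤ c * exp (k * T) / k := by gcongr; linarith

theorem le_mul_exp_of_abs_mul_exp_neg_le {x R k t : ℝ} (h : |x * exp (-k * t)| ≤ R) :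
    x ≤ R * exp (k * t) :=
  calc x ≤ |x * exp (-k * t)| * exp (k * t) := by
        rw [abs_mul, abs_exp, mul_assoc, ← exp_add]; simpa using le_abs_self x
    _ ≤ R * exp (k * t) := by gcongr

theorem stmt3 (y r : ℝ → ℝ) (p q lam : ℝ)
    (hy_cont : ContinuousOn y (Set.Ici 0))
    (hy_nn : ∀ t ≥ (0 : ℝ), 0 ≤ y t)
    (hy0 : ∀ t ∈ Set.Ico (-1 : ℝ) 0, y t = 0)
    (hp : 0 ≤ p) (hq : 0 ≤ q) (hlam : 0 < lam)
    (hchar : lam - p - q * Real.exp (-lam) > 0)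
    (hr : ∃ R, ∀ t ≥ (0 : ℝ), |r t * Real.exp (-lam * t)| ≤ R)
    (hineq : ∀ t ≥ (0 : ℝ), y t ≤ p * (∫ s in (0 : ℝ)..t, y s)
        + q * (∫ s in (0 : ℝ)..t, y (s - 1)) + r t) :
    ∃ C, ∀ t ≥ (0 : ℝ), y t ≤ C * Real.exp (lam * t) := by
  obtain ⟨R, hR⟩ := hr
  have hR0 : 0 ≤ R := (abs_nonneg _).trans (hR 0 le_rfl)
  obtain ⟨C, hCD, hC⟩ : ∃ C, C * (lam - p - q * exp (-lam)) = (R + 1) * lam ∧ 0 ≤ C :=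
    ⟨_, div_mul_cancel₀ _ hchar.ne', div_nonneg (by positivity) hchar.le⟩
  refine ⟨C, fun t ht => (forall_lt_of_forall_Ico_lt (g := fun t => C * exp (lam * t))
    hy_cont (by fun_prop) ?_ t ht).le⟩
  intro T hT hbelow
  have hI₁ : ∫ s in (0 : ℝ)..T, y s ≤ C * exp (lam * T) / lam :=
    integral_le_mul_exp_div hlam hC hT (fun s hs => hy_nn s hs.1.le)
      (fun s hs => (hbelow s ⟨hs.1.le, hs.2⟩).le)
  have hdelay : ∀ s ∈ Ioo 0 T, 0 ≤ y (s - 1) ∧ y (s - 1) ≤ C * exp (-lam) * exp (lam * s) := by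
    intro s hs
    rw [mul_assoc, ← exp_add, show -lam + lam * s = lam * (s - 1) by ring]
    rcases lt_or_ge (s - 1) 0 with h | h
    · rw [hy0 _ ⟨by linarith [hs.1], h⟩]
      exact ⟨le_rfl, by positivity⟩
    · exact ⟨hy_nn _ h, (hbelow _ ⟨h, by linarith [hs.2]⟩).le⟩
  have hI₂ : ∫ s in (0 : ℝ)..T, y (s - 1) ≤ C * exp (-lam) * exp (lam * T) / lam :=
    integral_le_mul_exp_div hlam (by positivity) hT (fun s hs => (hdelay s hs).1)
      (fun s hs => (hdelay s hs).2)
  calc y T ≤ p * (∫ s in (0 : ℝ)..T, y s) + q * (∫ s in (0 : ℝ)..T, y (s - 1)) + r T :=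
        hineq T hT
    _ ≤ p * (C * exp (lam * T) / lam) + q * (C * exp (-lam) * exp (lam * T) / lam)
          + R * exp (lam * T) := by
        gcongr; exact le_mul_exp_of_abs_mul_exp_neg_le (hR T hT)
    _ = (C - 1) * exp (lam * T) := by
        field_simp
        linear_combination -hCD
    _ < C * exp (lam * T) := by gcongr; linarith
end

section
/- With Z, P as above (‖Z(t)‖ ≤ C₃e^{βt}, β < 0; ‖P(t) − P_∞‖ ≤ 2K₂e^{αt} with α < 0, α ≠ β, for a constant vector P_∞), the convolution M̂(t) = ∫₀ᵗ Z(s)P(t−s) ds converges exponentially to M̂_∞ = ∫₀^∞ Z(s)P_∞ ds: ‖M̂(t) − M̂_∞‖ ≤ C₃(‖P_∞‖/|β| + 4K₂/|α−β|) e^{t·max{α,β}} for all t ≥ 0. -/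
open MeasureTheory Set Real Matrix Finset

/-!
Subtracting `∫₀ᵗ Z(s) P∞ ds` splits `M̂(t) - M̂∞` into `∫₀ᵗ Z(s) (P(t - s) - P∞) ds` minus the tail
`∫ₜ^∞ Z(s) P∞ ds`. With the ℓ¹ norm on vectors and the entrywise ℓ¹ norm on matrices (which is
submultiplicative for `*ᵥ`), the first term is bounded by `2 K₂ C₃ ∫₀ᵗ e^{βs} e^{α(t-s)} ds
= 2 K₂ C₃ (e^{βt} - e^{αt}) / (β - α) ≤ 2 K₂ C₃ e^{t max(α, β)} / |α - β|`, and the tail by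
`C₃ ‖P∞‖ e^{βt} / |β|`.
-/

lemma sum_abs_mulVec_le {m n : Type*} [Fintype m] [Fintype n] (M : Matrix m n ℝ) (v : n → ℝ) :
    ∑ i, |(M *ᵥ v) i| ≤ (∑ i, ∑ j, |M i j|) * ∑ j, |v j| := by
  rw [Finset.sum_mul]
  refine sum_le_sum fun i _ => ?_
  calc |(M *ᵥ v) i| ≤ ∑ j, |M i j| * |v j| := by
        simpa only [mulVec, dotProduct, abs_mul] using
          abs_sum_le_sum_abs (fun j => M i j * v j) univ
    _ ≤ ∑ j, |M i j| * ∑ k, |v k| := by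
        gcongr with j
        exact single_le_sum (f := fun k => |v k|) (fun k _ => abs_nonneg _) (mem_univ j)
    _ = (∑ j, |M i j|) * ∑ k, |v k| := (Finset.sum_mul ..).symm

lemma measurable_mulVec_apply {Ω m n : Type*} [MeasurableSpace Ω] [Fintype n]
    {M : Ω → Matrix m n ℝ} {v : Ω → n → ℝ} (hM : ∀ i j, Measurable fun s => M s i j)
    (hv : ∀ j, Measurable fun s => v s j) (i : m) : Measurable fun s => (M s *ᵥ v s) i := by
  simp only [mulVec, dotProduct]
  exact Finset.measurable_sum _ fun j _ => (hM i j).mul (hv j)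

section Domination

variable {Ω ι : Type*} [MeasurableSpace Ω] [Fintype ι] {μ : Measure Ω} {u : ι → Ω → ℝ}
  {B : Ω → ℝ}

lemma integrable_of_sum_abs_le (hu : ∀ i, AEStronglyMeasurable (u i) μ) (hB : Integrable B μ)
    (hle : ∀ᵐ s ∂μ, ∑ i, |u i s| ≤ B s) (i : ι) : Integrable (u i) μ :=
  hB.mono' (hu i) <| hle.mono fun s hs =>
    (single_le_sum (f := fun j => |u j s|) (fun _ _ => abs_nonneg _) (mem_univ i)).trans hs

lemma sum_abs_integral_le (hu : ∀ i, AEStronglyMeasurable (u i) μ) (hB : Integrable B μ)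
    (hle : ∀ᵐ s ∂μ, ∑ i, |u i s| ≤ B s) : ∑ i, |∫ s, u i s ∂μ| ≤ ∫ s, B s ∂μ := by
  have hint i : Integrable (fun s => |u i s|) μ := (integrable_of_sum_abs_le hu hB hle i).abs
  calc ∑ i, |∫ s, u i s ∂μ| ≤ ∑ i, ∫ s, |u i s| ∂μ :=
        sum_le_sum fun i _ => abs_integral_le_integral_abs
    _ = ∫ s, ∑ i, |u i s| ∂μ := (integral_finsetSum _ fun i _ => hint i).symm
    _ ≤ ∫ s, B s ∂μ := integral_mono_ae (integrable_finsetSum _ fun i _ => hint i) hB hle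

end Domination

lemma intervalIntegral_add_sub_integral_Ioi {E : Type*} [NormedAddCommGroup E] [NormedSpace ℝ E]
    {u g : ℝ → E} {a b : ℝ} (hab : a ≤ b) (hu : IntervalIntegrable u volume a b)
    (hg : IntegrableOn g (Ioi a)) :
    (∫ s in a..b, u s + g s) - ∫ s in Ioi a, g s = (∫ s in a..b, u s) - ∫ s in Ioi b, g s := by
  have hg' : IntervalIntegrable g volume a b :=
    (intervalIntegrable_iff_integrableOn_Ioc_of_le hab).2 (hg.mono_set Ioc_subset_Ioi_self)
  rw [intervalIntegral.integral_add hu hg',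
    ← intervalIntegral.integral_interval_add_Ioi hg (hg.mono_set (Ioi_subset_Ioi hab))]
  abel

lemma integral_exp_mul_mul_exp_mul_sub {α β : ℝ} (h : α ≠ β) (t : ℝ) :
    ∫ s in (0 : ℝ)..t, exp (β * s) * exp (α * (t - s)) = (exp (β * t) - exp (α * t)) / (β - α) := by
  have hβα : β - α ≠ 0 := sub_ne_zero.2 h.symm
  have hexp s : exp (β * s) * exp (α * (t - s)) = exp (α * t) * exp ((β - α) * s) := by
    rw [← exp_add, ← exp_add]; ring_nf
  simp_rw [hexp, intervalIntegral.integral_const_mul,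
    intervalIntegral.integral_comp_mul_left (fun s => exp s) hβα, integral_exp, smul_eq_mul,
    mul_zero, exp_zero]
  field_simp
  rw [mul_sub, ← exp_add]
  ring_nf

lemma exp_sub_exp_div_sub_le {α β t : ℝ} (ht : 0 ≤ t) :
    (exp (β * t) - exp (α * t)) / (β - α) ≤ exp (t * max α β) / |α - β| := by
  have hmax γ (hγ : γ = α ∨ γ = β) : exp (γ * t) ≤ exp (t * max α β) := by
    rw [exp_le_exp, mul_comm]
    rcases hγ with rfl | rfl
    exacts [mul_le_mul_of_nonneg_left (le_max_left _ _) ht,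
      mul_le_mul_of_nonneg_left (le_max_right _ _) ht]
  have hdiff : |exp (β * t) - exp (α * t)| ≤ exp (t * max α β) :=
    abs_sub_le_iff.2 ⟨by linarith [hmax β (.inr rfl), exp_pos (α * t)],
      by linarith [hmax α (.inl rfl), exp_pos (β * t)]⟩
  calc (exp (β * t) - exp (α * t)) / (β - α) ≤ |exp (β * t) - exp (α * t)| / |α - β| := by
        rw [abs_sub_comm α β, ← abs_div]; exact le_abs_self _
    _ ≤ exp (t * max α β) / |α - β| := by gcongr

section Decay

variable {n : Type*} [Fintype n] {Z : ℝ → Matrix n n ℝ} {C β : ℝ}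

lemma sum_abs_mulVec_le_of_decay (hZ : ∀ s ≥ (0 : ℝ), ∑ i, ∑ j, |Z s i j| ≤ C * exp (β * s))
    (v : n → ℝ) {s : ℝ} (hs : 0 ≤ s) :
    ∑ i, |(Z s *ᵥ v) i| ≤ C * exp (β * s) * ∑ j, |v j| :=
  (sum_abs_mulVec_le (Z s) v).trans <|
    mul_le_mul_of_nonneg_right (hZ s hs) (sum_nonneg fun _ _ => abs_nonneg _)

lemma integrableOn_Ioi_mulVec_apply (hβ : β < 0) (hZm : ∀ i j, Measurable fun s => Z s i j)
    (hZ : ∀ s ≥ (0 : ℝ), ∑ i, ∑ j, |Z s i j| ≤ C * exp (β * s)) (v : n → ℝ) (i : n) :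
    IntegrableOn (fun s => (Z s *ᵥ v) i) (Ioi 0) := by
  refine integrable_of_sum_abs_le (u := fun i s => (Z s *ᵥ v) i)
    (fun i => (measurable_mulVec_apply (v := fun _ => v) hZm
      (fun _ => measurable_const) i).aestronglyMeasurable)
    (((integrableOn_exp_mul_Ioi hβ 0).const_mul C).mul_const (∑ j, |v j|)) ?_ i
  filter_upwards [ae_restrict_mem measurableSet_Ioi] with s hs
  exact sum_abs_mulVec_le_of_decay hZ v (le_of_lt hs)

lemma sum_abs_setIntegral_Ioi_mulVec_le (hβ : β < 0) (hZm : ∀ i j, Measurable fun s => Z s i j)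
    (hZ : ∀ s ≥ (0 : ℝ), ∑ i, ∑ j, |Z s i j| ≤ C * exp (β * s)) (v : n → ℝ) {t : ℝ}
    (ht : 0 ≤ t) :
    ∑ i, |∫ s in Ioi t, (Z s *ᵥ v) i| ≤ C * (∑ j, |v j|) / |β| * exp (β * t) := by
  have hB := ((integrableOn_exp_mul_Ioi hβ t).const_mul C).mul_const (∑ j, |v j|)
  refine (sum_abs_integral_le (u := fun i s => (Z s *ᵥ v) i)
    (fun i => (measurable_mulVec_apply (v := fun _ => v) hZm
      (fun _ => measurable_const) i).aestronglyMeasurable)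
    hB ?_).trans_eq ?_
  · filter_upwards [ae_restrict_mem measurableSet_Ioi] with s hs
    exact sum_abs_mulVec_le_of_decay hZ v (ht.trans (le_of_lt hs))
  · rw [integral_mul_const, integral_const_mul, integral_exp_mul_Ioi hβ, abs_of_neg hβ]
    ring

variable {P : ℝ → n → ℝ} {Pinf : n → ℝ} {K α : ℝ}

lemma sum_abs_mulVec_sub_le (hZ : ∀ s ≥ (0 : ℝ), ∑ i, ∑ j, |Z s i j| ≤ C * exp (β * s))
    (hP : ∀ s ≥ (0 : ℝ), ∑ i, |P s i - Pinf i| ≤ K * exp (α * s)) (hC : 0 ≤ C) {s t : ℝ}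
    (hs : s ∈ Icc 0 t) :
    ∑ i, |(Z s *ᵥ (P (t - s) - Pinf)) i| ≤ C * K * (exp (β * s) * exp (α * (t - s))) :=
  calc ∑ i, |(Z s *ᵥ (P (t - s) - Pinf)) i|
      ≤ C * exp (β * s) * ∑ j, |P (t - s) j - Pinf j| := sum_abs_mulVec_le_of_decay hZ _ hs.1
    _ ≤ C * exp (β * s) * (K * exp (α * (t - s))) := by
        gcongr; exact hP _ (sub_nonneg.2 hs.2)
    _ = C * K * (exp (β * s) * exp (α * (t - s))) := by ring

lemma measurable_mulVec_sub_apply (hZm : ∀ i j, Measurable fun s => Z s i j)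
    (hPm : ∀ i, Measurable fun s => P s i) (t : ℝ) (i : n) :
    Measurable fun s => (Z s *ᵥ (P (t - s) - Pinf)) i :=
  measurable_mulVec_apply hZm
    (fun j => ((hPm j).comp (measurable_const.sub measurable_id)).sub measurable_const) i

lemma intervalIntegrable_mulVec_sub_apply (hZm : ∀ i j, Measurable fun s => Z s i j)
    (hPm : ∀ i, Measurable fun s => P s i)
    (hZ : ∀ s ≥ (0 : ℝ), ∑ i, ∑ j, |Z s i j| ≤ C * exp (β * s))
    (hP : ∀ s ≥ (0 : ℝ), ∑ i, |P s i - Pinf i| ≤ K * exp (α * s)) (hC : 0 ≤ C) {t : ℝ}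
    (ht : 0 ≤ t) (i : n) :
    IntervalIntegrable (fun s => (Z s *ᵥ (P (t - s) - Pinf)) i) volume 0 t := by
  refine (intervalIntegrable_iff_integrableOn_Ioc_of_le ht).2 <|
    integrable_of_sum_abs_le (u := fun i s => (Z s *ᵥ (P (t - s) - Pinf)) i)
      (fun i => (measurable_mulVec_sub_apply hZm hPm t i).aestronglyMeasurable)
      (B := fun s => C * K * (exp (β * s) * exp (α * (t - s))))
      (Continuous.integrableOn_Ioc (by fun_prop)) ?_ i
  filter_upwards [ae_restrict_mem measurableSet_Ioc] with s hs
  exact sum_abs_mulVec_sub_le hZ hP hC (Ioc_subset_Icc_self hs)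

lemma sum_abs_intervalIntegral_mulVec_sub_le (hαβ : α ≠ β)
    (hZm : ∀ i j, Measurable fun s => Z s i j) (hPm : ∀ i, Measurable fun s => P s i)
    (hZ : ∀ s ≥ (0 : ℝ), ∑ i, ∑ j, |Z s i j| ≤ C * exp (β * s))
    (hP : ∀ s ≥ (0 : ℝ), ∑ i, |P s i - Pinf i| ≤ K * exp (α * s)) (hC : 0 ≤ C) (hK : 0 ≤ K)
    {t : ℝ} (ht : 0 ≤ t) :
    ∑ i, |∫ s in (0 : ℝ)..t, (Z s *ᵥ (P (t - s) - Pinf)) i|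
      ≤ C * K * (exp (t * max α β) / |α - β|) := by
  simp_rw [intervalIntegral.integral_of_le ht]
  refine (sum_abs_integral_le (u := fun i s => (Z s *ᵥ (P (t - s) - Pinf)) i)
    (fun i => (measurable_mulVec_sub_apply hZm hPm t i).aestronglyMeasurable)
    (B := fun s => C * K * (exp (β * s) * exp (α * (t - s))))
    (Continuous.integrableOn_Ioc (by fun_prop)) ?_).trans ?_
  · filter_upwards [ae_restrict_mem measurableSet_Ioc] with s hs
    exact sum_abs_mulVec_sub_le hZ hP hC (Ioc_subset_Icc_self hs)
  · rw [integral_const_mul, ← intervalIntegral.integral_of_le ht,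
      integral_exp_mul_mul_exp_mul_sub hαβ]
    exact mul_le_mul_of_nonneg_left (exp_sub_exp_div_sub_le ht) (mul_nonneg hC hK)

end Decay

theorem stmt13_general (Z : ℝ → Matrix (Fin 2) (Fin 2) ℝ) (P : ℝ → Fin 2 → ℝ)
    (Pinf : Fin 2 → ℝ)
    (C₃ K₂ α β : ℝ) (hC₃ : 0 < C₃) (hK₂ : 0 < K₂)
    (hβ : β < 0) (hαβ : α ≠ β)
    (hZm : ∀ i j, Measurable fun t => Z t i j)
    (hPm : ∀ i, Measurable fun t => P t i)
    (hZ : ∀ t ≥ (0 : ℝ), ∑ i, ∑ j, |Z t i j| ≤ C₃ * Real.exp (β * t))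
    (hP : ∀ t ≥ (0 : ℝ), ∑ i, |P t i - Pinf i| ≤ 2 * K₂ * Real.exp (α * t)) :
    ∀ t ≥ (0 : ℝ),
      ∑ i, |(∫ s in (0 : ℝ)..t, (Z s).mulVec (P (t - s)) i)
          - ∫ s in Set.Ioi (0 : ℝ), (Z s).mulVec Pinf i|
        ≤ C₃ * ((∑ i, |Pinf i|) / |β| + 4 * K₂ / |α - β|) * Real.exp (t * max α β) := by
  intro t ht
  have hsplit i : (∫ s in (0 : ℝ)..t, (Z s *ᵥ P (t - s)) i) - ∫ s in Ioi 0, (Z s *ᵥ Pinf) i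
      = (∫ s in (0 : ℝ)..t, (Z s *ᵥ (P (t - s) - Pinf)) i) - ∫ s in Ioi t, (Z s *ᵥ Pinf) i := by
    simpa only [mulVec_sub, Pi.sub_apply, sub_add_cancel] using
      intervalIntegral_add_sub_integral_Ioi ht
        (intervalIntegrable_mulVec_sub_apply hZm hPm hZ hP hC₃.le ht i)
        (integrableOn_Ioi_mulVec_apply hβ hZm hZ Pinf i)
  have hconv := sum_abs_intervalIntegral_mulVec_sub_le hαβ hZm hPm hZ hP hC₃.le
    (by positivity) ht
  have htail := sum_abs_setIntegral_Ioi_mulVec_le hβ hZm hZ Pinf ht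
  have hexp : exp (β * t) ≤ exp (t * max α β) := by
    rw [exp_le_exp, mul_comm]
    exact mul_le_mul_of_nonneg_left (le_max_right α β) ht
  calc _ = ∑ i, |(∫ s in (0 : ℝ)..t, (Z s *ᵥ (P (t - s) - Pinf)) i)
          - ∫ s in Ioi t, (Z s *ᵥ Pinf) i| := sum_congr rfl fun i _ => by rw [hsplit]
    _ ≤ ∑ i, |∫ s in (0 : ℝ)..t, (Z s *ᵥ (P (t - s) - Pinf)) i|
          + ∑ i, |∫ s in Ioi t, (Z s *ᵥ Pinf) i| :=
        (sum_le_sum fun i _ => abs_sub _ _).trans_eq sum_add_distrib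
    _ ≤ C₃ * (2 * K₂) * (exp (t * max α β) / |α - β|)
          + C₃ * (∑ i, |Pinf i|) / |β| * exp (β * t) := add_le_add hconv htail
    _ ≤ C₃ * (4 * K₂) * (exp (t * max α β) / |α - β|)
          + C₃ * (∑ i, |Pinf i|) / |β| * exp (t * max α β) := by gcongr; linarith
    _ = C₃ * ((∑ i, |Pinf i|) / |β| + 4 * K₂ / |α - β|) * exp (t * max α β) := by ring

theorem stmt13 (Z : ℝ → Matrix (Fin 2) (Fin 2) ℝ) (P : ℝ → Fin 2 → ℝ)
    (Pinf : Fin 2 → ℝ)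
    (C₃ K₂ α β : ℝ) (hC₃ : 0 < C₃) (hK₂ : 0 < K₂)
    (hβ : β < 0) (hα : α < 0) (hαβ : α ≠ β)
    (hZm : ∀ i j, Measurable fun t => Z t i j)
    (hPm : ∀ i, Measurable fun t => P t i)
    (hZ : ∀ t ≥ (0 : ℝ), ∑ i, ∑ j, |Z t i j| ≤ C₃ * Real.exp (β * t))
    (hP : ∀ t ≥ (0 : ℝ), ∑ i, |P t i - Pinf i| ≤ 2 * K₂ * Real.exp (α * t)) :
    ∀ t ≥ (0 : ℝ),
      ∑ i, |(∫ s in (0 : ℝ)..t, (Z s).mulVec (P (t - s)) i)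
          - ∫ s in Set.Ioi (0 : ℝ), (Z s).mulVec Pinf i|
        ≤ C₃ * ((∑ i, |Pinf i|) / |β| + 4 * K₂ / |α - β|) * Real.exp (t * max α β) :=
  stmt13_general Z P Pinf C₃ K₂ α β hC₃ hK₂ hβ hαβ hZm hPm hZ hP
end

section
/- If X : [0,∞) → Mat_N(ℝ) satisfies ‖X(t)‖ ≤ K̄e^{αt} with α < 0 and P : [0,∞) → Mat_N(ℝ) satisfies ‖P(s)‖ ≤ (c₀ + c₁ e^{αs})² with c₀, c₁ ≥ 0, then F(t) = ∫₀ᵗ X(t−s)ᵀ P(s) X(t−s) ds satisfies ‖F(t)‖ ≤ K₁(1 − e^{2αt}) for some constant K₁ > 0 depending only on K̄, c₀, c₁, α. -/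
/-!
Since the entrywise L¹ norm is submultiplicative, the integrand of `F(t)` is bounded by
`K̄² (c₀ + c₁)² e^{2α(t-s)}`, whose integral over `[0, t]` is
`K̄² (c₀ + c₁)² (1 - e^{2αt}) / (-2α)`.
-/

open Matrix MeasureTheory Real Finset

namespace Matrix

variable {l m n R : Type*} [Fintype l] [Fintype m] [Fintype n]
  [CommRing R] [LinearOrder R]

def entrywiseL1 (A : Matrix m n R) : R := ∑ i, ∑ j, |A i j|

lemma entrywiseL1_nonneg [IsStrictOrderedRing R] (A : Matrix m n R) : 0 ≤ A.entrywiseL1 := by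
  unfold entrywiseL1; positivity

@[simp]
lemma entrywiseL1_transpose (A : Matrix m n R) : Aᵀ.entrywiseL1 = A.entrywiseL1 :=
  Finset.sum_comm

lemma entrywiseL1_mul_le [IsStrictOrderedRing R] (A : Matrix l m R) (B : Matrix m n R) :
    (A * B).entrywiseL1 ≤ A.entrywiseL1 * B.entrywiseL1 := by
  have hrow : ∀ j, ∑ k, |B j k| ≤ B.entrywiseL1 := fun j => by
    unfold entrywiseL1
    exact single_le_sum (fun j _ => sum_nonneg fun k _ => abs_nonneg (B j k)) (mem_univ j)
  calc (A * B).entrywiseL1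
      ≤ ∑ i, ∑ k, ∑ j, |A i j| * |B j k| := by
        unfold entrywiseL1
        gcongr with i _ k _
        simpa only [mul_apply, abs_mul] using abs_sum_le_sum_abs (fun j => A i j * B j k) univ
    _ = ∑ i, ∑ j, |A i j| * ∑ k, |B j k| := by
        simp only [mul_sum]; exact sum_congr rfl fun i _ => sum_comm
    _ ≤ ∑ i, ∑ j, |A i j| * B.entrywiseL1 := by gcongr with i _ j _; exact hrow j
    _ = A.entrywiseL1 * B.entrywiseL1 := by simp only [entrywiseL1, sum_mul]

lemma entrywiseL1_transpose_mul_mul_le [IsStrictOrderedRing R] (A : Matrix m n R)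
    (B : Matrix m m R) :
    (Aᵀ * B * A).entrywiseL1 ≤ A.entrywiseL1 ^ 2 * B.entrywiseL1 :=
  calc (Aᵀ * B * A).entrywiseL1
      ≤ Aᵀ.entrywiseL1 * B.entrywiseL1 * A.entrywiseL1 :=
        (entrywiseL1_mul_le _ _).trans <|
          mul_le_mul_of_nonneg_right (entrywiseL1_mul_le _ _) (entrywiseL1_nonneg A)
    _ = A.entrywiseL1 ^ 2 * B.entrywiseL1 := by rw [entrywiseL1_transpose]; ring

end Matrix

lemma sum_intervalIntegral_le_of_sum_le {ι : Type*} (s : Finset ι) {f : ι → ℝ → ℝ} {g : ℝ → ℝ}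
    {a b : ℝ} (hab : a ≤ b) (hf : ∀ i ∈ s, ∀ x ∈ Set.Icc a b, 0 ≤ f i x)
    (hg : IntervalIntegrable g volume a b) (hfg : ∀ x ∈ Set.Icc a b, ∑ i ∈ s, f i x ≤ g x) :
    ∑ i ∈ s, ∫ x in a..b, f i x ≤ ∫ x in a..b, g x := by
  classical
  -- A non-integrable summand has integral `0`, so it may be replaced by `0`.
  set f' : ι → ℝ → ℝ := fun i => if IntervalIntegrable (f i) volume a b then f i else 0
  have hf'_int : ∀ i, IntervalIntegrable (f' i) volume a b := fun i => by
    unfold f'; split_ifs with h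
    · exact h
    · exact intervalIntegrable_const
  have hf'_integral : ∀ i, ∫ x in a..b, f' i x = ∫ x in a..b, f i x := fun i => by
    unfold f'; split_ifs with h
    · rfl
    · simp [intervalIntegral.integral_undef h]
  have hf'_le : ∀ i ∈ s, ∀ x ∈ Set.Icc a b, f' i x ≤ f i x := fun i hi x hx => by
    unfold f'; split_ifs
    · exact le_rfl
    · exact hf i hi x hx
  calc ∑ i ∈ s, ∫ x in a..b, f i x
      = ∫ x in a..b, ∑ i ∈ s, f' i x := by
        rw [intervalIntegral.integral_finsetSum fun i _ => hf'_int i]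
        exact sum_congr rfl fun i _ => (hf'_integral i).symm
    _ ≤ ∫ x in a..b, g x := by
        refine intervalIntegral.integral_mono_on hab ?_ hg fun x hx => ?_
        · simpa only [Finset.sum_fn] using IntervalIntegrable.sum s fun i _ => hf'_int i
        · exact (sum_le_sum fun i hi => hf'_le i hi x hx).trans (hfg x hx)

lemma integral_exp_mul_sub {β : ℝ} (hβ : β ≠ 0) (t : ℝ) :
    ∫ s in (0 : ℝ)..t, exp (β * (t - s)) = (exp (β * t) - 1) / β := by
  rw [intervalIntegral.integral_comp_sub_left (fun u => exp (β * u)),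
    intervalIntegral.integral_comp_mul_left exp hβ, integral_exp]
  simp [div_eq_inv_mul]

theorem stmt14_general (Kb c₀ c₁ α : ℝ) (hc₀ : 0 ≤ c₀) (hc₁ : 0 ≤ c₁) (hα : α < 0) :
    ∃ K₁ > (0 : ℝ), ∀ (n : ℕ) (X P : ℝ → Matrix (Fin n) (Fin n) ℝ),
      (∀ t ≥ (0 : ℝ), ∑ i, ∑ j, |X t i j| ≤ Kb * Real.exp (α * t)) →
      (∀ s ≥ (0 : ℝ), ∑ i, ∑ j, |P s i j| ≤ (c₀ + c₁ * Real.exp (α * s)) ^ 2) →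
      ∀ t > (0 : ℝ), ∑ i, ∑ j,
        |∫ s in (0 : ℝ)..t, ((X (t - s))ᵀ * P s * X (t - s)) i j|
          ≤ K₁ * (1 - Real.exp (2 * α * t)) := by
  have h2α : 0 < -(2 * α) := by linarith
  refine ⟨Kb ^ 2 * (c₀ + c₁) ^ 2 / -(2 * α) + 1, by positivity, fun n X P hX hP t ht => ?_⟩
  have hP' : ∀ s ≥ (0 : ℝ), (P s).entrywiseL1 ≤ (c₀ + c₁) ^ 2 := fun s hs => by
    refine (hP s hs).trans ?_
    have : exp (α * s) ≤ 1 := exp_le_one_iff.2 (mul_nonpos_of_nonpos_of_nonneg hα.le hs)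
    gcongr
    exact mul_le_of_le_one_right hc₁ this
  have hbound : ∀ s ∈ Set.Icc 0 t, ((X (t - s))ᵀ * P s * X (t - s)).entrywiseL1 ≤
      Kb ^ 2 * (c₀ + c₁) ^ 2 * exp (2 * α * (t - s)) := by
    rintro s ⟨hs0, hst⟩
    have hXs : (X (t - s)).entrywiseL1 ≤ Kb * exp (α * (t - s)) := hX _ (by linarith)
    calc ((X (t - s))ᵀ * P s * X (t - s)).entrywiseL1
        ≤ (X (t - s)).entrywiseL1 ^ 2 * (P s).entrywiseL1 := entrywiseL1_transpose_mul_mul_le _ _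
      _ ≤ (Kb * exp (α * (t - s))) ^ 2 * (c₀ + c₁) ^ 2 :=
        mul_le_mul (pow_le_pow_left₀ (entrywiseL1_nonneg _) hXs 2) (hP' s hs0)
          (entrywiseL1_nonneg _) (by positivity)
      _ = Kb ^ 2 * (c₀ + c₁) ^ 2 * exp (2 * α * (t - s)) := by
        rw [mul_pow, ← exp_nat_mul]; push_cast; ring_nf
  calc ∑ i, ∑ j, |∫ s in (0 : ℝ)..t, ((X (t - s))ᵀ * P s * X (t - s)) i j|
      ≤ ∑ ij : Fin n × Fin n, ∫ s in (0 : ℝ)..t, |((X (t - s))ᵀ * P s * X (t - s)) ij.1 ij.2| := by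
        rw [Fintype.sum_prod_type]
        gcongr
        exact intervalIntegral.abs_integral_le_integral_abs ht.le
    _ ≤ ∫ s in (0 : ℝ)..t, Kb ^ 2 * (c₀ + c₁) ^ 2 * exp (2 * α * (t - s)) := by
        refine sum_intervalIntegral_le_of_sum_le _ ht.le (fun _ _ _ _ => abs_nonneg _)
          ((by fun_prop : Continuous _).intervalIntegrable _ _) fun s hs => ?_
        simpa only [entrywiseL1, Fintype.sum_prod_type] using hbound s hs
    _ = Kb ^ 2 * (c₀ + c₁) ^ 2 / -(2 * α) * (1 - exp (2 * α * t)) := by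
        rw [intervalIntegral.integral_const_mul, integral_exp_mul_sub (by linarith)]
        field_simp
        ring
    _ ≤ (Kb ^ 2 * (c₀ + c₁) ^ 2 / -(2 * α) + 1) * (1 - exp (2 * α * t)) :=
        mul_le_mul_of_nonneg_right (le_add_of_nonneg_right zero_le_one)
          (sub_nonneg.2 (exp_le_one_iff.2 (by nlinarith)))

theorem stmt14 (Kb c₀ c₁ α : ℝ) (hK : 1 ≤ Kb) (hc₀ : 0 ≤ c₀) (hc₁ : 0 ≤ c₁) (hα : α < 0) :
    ∃ K₁ > (0 : ℝ), ∀ (n : ℕ) (X P : ℝ → Matrix (Fin n) (Fin n) ℝ),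
      (∀ t ≥ (0 : ℝ), ∑ i, ∑ j, |X t i j| ≤ Kb * Real.exp (α * t)) →
      (∀ s ≥ (0 : ℝ), ∑ i, ∑ j, |P s i j| ≤ (c₀ + c₁ * Real.exp (α * s)) ^ 2) →
      ∀ t > (0 : ℝ), ∑ i, ∑ j,
        |∫ s in (0 : ℝ)..t, ((X (t - s))ᵀ * P s * X (t - s)) i j|
          ≤ K₁ * (1 - Real.exp (2 * α * t)) :=
  stmt14_general Kb c₀ c₁ α hc₀ hc₁ hα
end

section
/- Suppose m ≥ 1 and for j = n₀+1,…,m let a_j, b_j ∈ ℝ with a_j² + b_j² ≠ 0 and ω_j ∈ ℝ. Then for any ε > 0 sufficiently small, the set U₀ = {t ≥ 0 : sin(θ_j + ω_j t) > ε for all j = n₀+1,…,m} (with θ_j determined by sin θ_j = a_j/√(a_j²+b_j²), cos θ_j = b_j/√(a_j²+b_j²)) has infinite Lebesgue measure, provided such t exist for a common small ε. -/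
/-!
Finitely many rotations `t ↦ ω j * t` of the circle `ℝ/2πℤ` recur simultaneously: by compactness
of the torus, `n • ω` returns arbitrarily close to `0` at arbitrarily large integer times `n`.
Since `sin` is `1`-Lipschitz and `2π`-periodic, at each such time `t₀ + n`, and on a window of fixed
length `δ` after it, every `sin (θ j + ω j * t)` stays within `ε` of its value at `t₀`, hence
above `ε`. Infinitely many disjoint windows of length `δ` have infinite total measure.
-/

open Set Filter Topology MeasureTheory Real

theorem exists_nsmul_norm_lt {G : Type*} [SeminormedAddCommGroup G] [CompactSpace G] (x : G)
    {η : ℝ} (hη : 0 < η) (N : ℕ) : ∃ n, N < n ∧ ‖n • x‖ < η := by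
  obtain ⟨y, -, φ, hφ, hlim⟩ :=
    isCompact_univ.tendsto_subseq (x := fun k : ℕ => k • x) fun _ => mem_univ _
  obtain ⟨K, hK⟩ := Metric.cauchySeq_iff'.1 hlim.cauchySeq η hη
  have hgap : φ K + (N + 1) ≤ φ (N + 1 + K) := by
    simpa [add_comm] using hφ.add_le_nat (N + 1) K
  refine ⟨φ (N + 1 + K) - φ K, by omega, ?_⟩
  rw [sub_nsmul _ (hφ.monotone (by omega : K ≤ N + 1 + K)), ← sub_eq_add_neg, ← dist_eq_norm]
  exact hK (N + 1 + K) (by omega)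

theorem AddCircle.exists_nat_forall_norm_coe_mul_lt {ι : Type*} [Fintype ι] {p : ℝ}
    [Fact (0 < p)] (ω : ι → ℝ) {η : ℝ} (hη : 0 < η) (N : ℕ) :
    ∃ n : ℕ, N < n ∧ ∀ j, ‖((n * ω j : ℝ) : AddCircle p)‖ < η := by
  obtain ⟨n, hNn, hn⟩ := exists_nsmul_norm_lt (fun j => (ω j : AddCircle p)) hη N
  refine ⟨n, hNn, fun j => ?_⟩
  simpa [← nsmul_eq_mul] using (pi_norm_lt_iff hη).1 hn j

theorem AddCircle.norm_coe_add_le {p : ℝ} (a b : ℝ) :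
    ‖((a + b : ℝ) : AddCircle p)‖ ≤ ‖(a : AddCircle p)‖ + |b| := by
  rw [AddCircle.coe_add, ← Real.norm_eq_abs]
  exact (norm_add_le _ _).trans (add_le_add_right QuotientAddGroup.norm_mk_le_norm _)

theorem Real.abs_sin_sub_sin_le_norm_coe (x y : ℝ) :
    |sin x - sin y| ≤ ‖((x - y : ℝ) : AddCircle (2 * π))‖ := by
  rw [AddCircle.norm_eq]
  set k := round ((2 * π)⁻¹ * (x - y))
  calc |sin x - sin y| = |sin (x - k * (2 * π)) - sin y| := by rw [sin_sub_int_mul_two_pi]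
    _ ≤ |x - k * (2 * π) - y| := abs_sin_sub_sin_le _ _
    _ = |x - y - k * (2 * π)| := by ring_nf

theorem Real.volume_eq_top_of_forall_exists_Icc_subset {S : Set ℝ} {δ : ℝ} (hδ : 0 < δ)
    (h : ∀ N, ∃ a ≥ N, Icc a (a + δ) ⊆ S) : volume S = ⊤ := by
  have hwindows : ∀ K : ℕ, ∀ N, K * ENNReal.ofReal δ ≤ volume (S ∩ Ici N) := by
    intro K
    induction K with
    | zero => simp
    | succ K ih =>
      intro N
      obtain ⟨a, haN, ha⟩ := h N
      have hdisj : Disjoint (Ico a (a + δ)) (S ∩ Ici (a + δ)) :=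
        disjoint_left.2 fun t ht ht' => (ht.2.trans_le ht'.2).false
      calc ((K + 1 : ℕ) : ENNReal) * ENNReal.ofReal δ
          = ENNReal.ofReal δ + K * ENNReal.ofReal δ := by push_cast; ring
        _ ≤ volume (Ico a (a + δ)) + volume (S ∩ Ici (a + δ)) := by
          rw [volume_Ico, add_sub_cancel_left]
          gcongr
          exact ih _
        _ = volume (Ico a (a + δ) ∪ S ∩ Ici (a + δ)) :=
          (measure_union' hdisj measurableSet_Ico).symm
        _ ≤ volume (S ∩ Ici N) := by
          refine measure_mono (union_subset ?_ ?_)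
          · exact fun t ht => ⟨ha (Ico_subset_Icc_self ht), haN.trans ht.1⟩
          · exact fun t ht => ⟨ht.1, haN.trans ((le_add_of_nonneg_right hδ.le).trans ht.2)⟩
  by_contra hS
  obtain ⟨K, hK⟩ := ENNReal.exists_nat_mul_gt (ENNReal.ofReal_pos.2 hδ).ne' hS
  exact ((hwindows K 0).trans (measure_mono inter_subset_left)).not_gt hK

theorem stmt16_general (m : ℕ) (ω θ : Fin m → ℝ)
    (ε : ℝ) (hε : 0 < ε)
    (ht₀ : ∃ t₀ ≥ (0 : ℝ), ∀ j, 2 * ε < Real.sin (θ j + ω j * t₀)) :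
    MeasureTheory.volume {t : ℝ | 0 ≤ t ∧ ∀ j, ε < Real.sin (θ j + ω j * t)} = ⊤ := by
  obtain ⟨t₀, ht₀0, ht₀⟩ := ht₀
  have hsmall : ∀ᶠ δ in 𝓝[>] (0 : ℝ), ∀ j, |ω j| * δ < ε / 2 :=
    eventually_all.2 fun j => (((continuous_const_mul |ω j|).tendsto' 0 0 (mul_zero _)).mono_left
      nhdsWithin_le_nhds).eventually (gt_mem_nhds (half_pos hε))
  obtain ⟨δ, hδ, hδpos⟩ := (hsmall.and self_mem_nhdsWithin).exists
  apply volume_eq_top_of_forall_exists_Icc_subset (mem_Ioi.1 hδpos)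
  intro N
  have : Fact (0 < 2 * π) := ⟨two_pi_pos⟩
  obtain ⟨n, hNn, hn⟩ :=
    AddCircle.exists_nat_forall_norm_coe_mul_lt (p := 2 * π) ω (half_pos hε) ⌈N⌉₊
  have hNn' : N < n := (Nat.le_ceil N).trans_lt (by exact_mod_cast hNn)
  refine ⟨t₀ + n, by linarith, fun t ht => ⟨by linarith [ht.1, n.cast_nonneg (α := ℝ)], fun j => ?_⟩⟩
  have hwindow : |ω j * (t - (t₀ + n))| ≤ |ω j| * δ := by
    rw [abs_mul, abs_of_nonneg (sub_nonneg.2 ht.1)]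
    exact mul_le_mul_of_nonneg_left (by linarith [ht.2]) (abs_nonneg _)
  have hdrift : ‖((ω j * (t - t₀) : ℝ) : AddCircle (2 * π))‖ < ε :=
    calc _ = ‖((n * ω j + ω j * (t - (t₀ + n)) : ℝ) : AddCircle (2 * π))‖ := by ring_nf
      _ ≤ ‖((n * ω j : ℝ) : AddCircle (2 * π))‖ + |ω j| * δ :=
        (AddCircle.norm_coe_add_le _ _).trans (by gcongr)
      _ < ε := by linarith [hn j, hδ j]
  have hclose := abs_sin_sub_sin_le_norm_coe (θ j + ω j * t) (θ j + ω j * t₀)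
  rw [show θ j + ω j * t - (θ j + ω j * t₀) = ω j * (t - t₀) by ring] at hclose
  linarith [(abs_le.1 (hclose.trans hdrift.le)).1, ht₀ j]

theorem stmt16 (m : ℕ) (hm : 1 ≤ m) (a b ω θ : Fin m → ℝ)
    (hab : ∀ j, a j ^ 2 + b j ^ 2 ≠ 0)
    (hθs : ∀ j, Real.sin (θ j) = a j / Real.sqrt (a j ^ 2 + b j ^ 2))
    (hθc : ∀ j, Real.cos (θ j) = b j / Real.sqrt (a j ^ 2 + b j ^ 2))
    (ε : ℝ) (hε : 0 < ε)
    (ht₀ : ∃ t₀ ≥ (0 : ℝ), ∀ j, 2 * ε < Real.sin (θ j + ω j * t₀)) :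
    MeasureTheory.volume {t : ℝ | 0 ≤ t ∧ ∀ j, ε < Real.sin (θ j + ω j * t)} = ⊤ :=
  stmt16_general m ω θ ε hε ht₀
end
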